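/- arXiv:1111.4512 — 3 statements merged into one kernel-verified Lean document; each statement's English description precedes it below -/
import Mathlib

section
/- Let S be an amiable semigroup which avoids M and let a, b ∈ S be idempotents with ab ≠ ba. Then (ab)^m a ≠ (ba)^n b for all integers m, n ≥ 0 (where (ab)^0 a = a and (ba)^0 b = b), and (ab)^m a ≠ (ab)^n a whenever m > n ≥ 0. -/
/-- The starred Green relation `𝓛*` on a semigroup `S`: `x 𝓛* y` iff for all
`u v ∈ S¹` (realized as `WithOne S`), `xu = xv ↔ yu = yv`. -/
def LStar {S : Type*} [Semigroup S] (x y : S) : Prop :=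
  ∀ u v : WithOne S,
    ((x : WithOne S) * u = (x : WithOne S) * v ↔ (y : WithOne S) * u = (y : WithOne S) * v)

/-- The starred Green relation `𝓡*` on a semigroup `S`: `x 𝓡* y` iff for all
`u v ∈ S¹` (realized as `WithOne S`), `ux = vx ↔ uy = vy`. -/
def RStar {S : Type*} [Semigroup S] (x y : S) : Prop :=
  ∀ u v : WithOne S,
    (u * (x : WithOne S) = v * (x : WithOne S) ↔ u * (y : WithOne S) = v * (y : WithOne S))

/-- A semigroup is amiable if each `𝓛*`-class and each `𝓡*`-class contains
exactly one idempotent. -/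
def IsAmiable (S : Type*) [Semigroup S] : Prop :=
  (∀ x : S, ∃! e : S, e * e = e ∧ LStar x e) ∧
  (∀ x : S, ∃! e : S, e * e = e ∧ RStar x e)

/-- A semigroup `S` avoids `M` iff it contains no four pairwise distinct elements
realizing the multiplication table of the four-element semigroup `M`. -/
def AvoidsM (S : Type*) [Semigroup S] : Prop :=
  ¬ ∃ a b c d : S,
      (a ≠ b ∧ a ≠ c ∧ a ≠ d ∧ b ≠ c ∧ b ≠ d ∧ c ≠ d) ∧
      a * a = a ∧ a * b = c ∧ a * c = c ∧ a * d = c ∧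
      b * a = d ∧ b * b = b ∧ b * c = c ∧ b * d = d ∧
      c * a = c ∧ c * b = c ∧ c * c = c ∧ c * d = c ∧
      d * a = d ∧ d * b = c ∧ d * c = c ∧ d * d = c

/-- `ABm a b n = (a*b)^(n+1)`; as `n` ranges over `ℕ` this gives the powers
`(ab)^m` for all `m ≥ 1`. -/
def ABm {S : Type*} [Mul S] (a b : S) : ℕ → S
  | 0 => a * b
  | n + 1 => (a * b) * ABm a b n

/-- `ABa a b n = (a*b)^n * a`, with the convention `(a*b)^0 * a = a`. -/
def ABa {S : Type*} [Mul S] (a b : S) : ℕ → S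
  | 0 => a
  | n + 1 => (a * b) * ABa a b n

section Aux

variable {S : Type*} [Semigroup S]

private lemma lstar_refl' (x : S) : LStar x x := fun _ _ => Iff.rfl

private lemma rstar_refl' (x : S) : RStar x x := fun _ _ => Iff.rfl

private lemma lstar_mp {x y u v : S} (h : LStar x y) (huv : x * u = x * v) :
    y * u = y * v := by
  have h2 := (h u v).mp (by rw [← WithOne.coe_mul, ← WithOne.coe_mul, huv])
  rw [← WithOne.coe_mul, ← WithOne.coe_mul] at h2
  exact WithOne.coe_inj.mp h2

private lemma lstar_mp_one {x y u : S} (h : LStar x y) (hu : x * u = x) :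
    y * u = y := by
  have h2 := (h u 1).mp (by rw [mul_one, ← WithOne.coe_mul, hu])
  rw [mul_one, ← WithOne.coe_mul] at h2
  exact WithOne.coe_inj.mp h2

private lemma rstar_mp {x y u v : S} (h : RStar x y) (huv : u * x = v * x) :
    u * y = v * y := by
  have h2 := (h u v).mp (by rw [← WithOne.coe_mul, ← WithOne.coe_mul, huv])
  rw [← WithOne.coe_mul, ← WithOne.coe_mul] at h2
  exact WithOne.coe_inj.mp h2

private lemma rstar_mp_one {x y u : S} (h : RStar x y) (hu : u * x = x) :
    u * y = y := by
  have h2 := (h u 1).mp (by rw [one_mul, ← WithOne.coe_mul, hu])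
  rw [one_mul, ← WithOne.coe_mul] at h2
  exact WithOne.coe_inj.mp h2

private lemma lstar_symm' {x y : S} (h : LStar x y) : LStar y x :=
  fun u v => (h u v).symm

private lemma rstar_symm' {x y : S} (h : RStar x y) : RStar y x :=
  fun u v => (h u v).symm

private lemma lstar_of_div {p q : S} (u v : S) (h1 : p = u * q) (h2 : q = v * p) :
    LStar p q := by
  intro U V
  constructor
  · intro h
    rw [h2, WithOne.coe_mul, mul_assoc, mul_assoc, h]
  · intro h
    rw [h1, WithOne.coe_mul, mul_assoc, mul_assoc, h]

private lemma rstar_of_div {p q : S} (u v : S) (h1 : p = q * u) (h2 : q = p * v) :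
    RStar p q := by
  intro U V
  constructor
  · intro h
    rw [h2, WithOne.coe_mul, ← mul_assoc, ← mul_assoc, h]
  · intro h
    rw [h1, WithOne.coe_mul, ← mul_assoc, ← mul_assoc, h]

private lemma idem_lstar_eq (hS : IsAmiable S) {p q : S} (hp : p * p = p)
    (hq : q * q = q) (h : LStar p q) : p = q := by
  obtain ⟨E, -, hu⟩ := hS.1 p
  rw [hu p ⟨hp, lstar_refl' p⟩, hu q ⟨hq, h⟩]

private lemma idem_rstar_eq (hS : IsAmiable S) {p q : S} (hp : p * p = p)
    (hq : q * q = q) (h : RStar p q) : p = q := by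
  obtain ⟨E, -, hu⟩ := hS.2 p
  rw [hu p ⟨hp, rstar_refl' p⟩, hu q ⟨hq, h⟩]

/-- If `e` is idempotent and `e*b = e` then `b*e = e` in an amiable semigroup. -/
private lemma absorb_left (hS : IsAmiable S) {e b : S} (he : e * e = e)
    (heb : e * b = e) : b * e = e := by
  have hidem : (b * e) * (b * e) = b * e := by
    rw [mul_assoc, ← mul_assoc e b e, heb, he]
  have h1 : e = e * (b * e) := by rw [← mul_assoc, heb, he]
  have hL : LStar e (b * e) := lstar_of_div e b h1 rfl
  exact (idem_lstar_eq hS he hidem hL).symm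

/-- If `f` is idempotent and `a*f = f` then `f*a = f` in an amiable semigroup. -/
private lemma absorb_right (hS : IsAmiable S) {f a : S} (hf : f * f = f)
    (haf : a * f = f) : f * a = f := by
  have hidem : (f * a) * (f * a) = f * a := by
    rw [mul_assoc, ← mul_assoc a f a, haf, ← mul_assoc, hf]
  have h1 : f = (f * a) * f := by rw [mul_assoc, haf, hf]
  have hR : RStar f (f * a) := rstar_of_div f a h1 rfl
  exact (idem_rstar_eq hS hf hidem hR).symm

end Aux

section Words

variable {S : Type*} [Semigroup S] (a b : S)

private lemma ABa_zero : ABa a b 0 = a := rfl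
private lemma ABm_zero : ABm a b 0 = a * b := rfl
private lemma ABa_succ (n : ℕ) : ABa a b (n + 1) = (a * b) * ABa a b n := rfl
private lemma ABm_succ (n : ℕ) : ABm a b (n + 1) = (a * b) * ABm a b n := rfl

private lemma ABa_mul_a (ha : a * a = a) : ∀ n, ABa a b n * a = ABa a b n := by
  intro n
  induction n with
  | zero => exact ha
  | succ n ih => rw [ABa_succ, mul_assoc, ih]

private lemma a_mul_ABa (ha : a * a = a) : ∀ n, a * ABa a b n = ABa a b n := by
  intro n
  induction n with
  | zero => exact ha
  | succ n ih =>
      rw [ABa_succ, ← mul_assoc, ← mul_assoc, ha]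

private lemma ABa_mul_b (hb : b * b = b) : ∀ n, ABa a b n * b = ABm a b n := by
  intro n
  induction n with
  | zero => rfl
  | succ n ih => rw [ABa_succ, ABm_succ, mul_assoc, ih]

private lemma ABm_mul_a : ∀ n, ABm a b n * a = ABa a b (n + 1) := by
  intro n
  induction n with
  | zero => rfl
  | succ n ih => rw [ABm_succ, mul_assoc, ih]; rfl

private lemma b_mul_ABa : ∀ n, b * ABa a b n = ABm b a n := by
  intro n
  induction n with
  | zero => rfl
  | succ n ih =>
      rw [ABa_succ, ← mul_assoc, ← mul_assoc, mul_assoc (b * a) b (ABa a b n), ih]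
      rfl

private lemma a_mul_ABm_ba : ∀ n, a * ABm b a n = ABa a b (n + 1) := by
  intro n
  induction n with
  | zero => show a * (b * a) = (a * b) * a; rw [mul_assoc]
  | succ n ih =>
      show a * ((b * a) * ABm b a n) = (a * b) * ABa a b (n + 1)
      rw [← mul_assoc, ← mul_assoc, mul_assoc (a * b) a (ABm b a n), ih]

private lemma ABm_mul_ab : ∀ n, ABm a b n * (a * b) = ABm a b (n + 1) := by
  intro n
  induction n with
  | zero => rfl
  | succ n ih => rw [ABm_succ, mul_assoc, ih]; rfl

private lemma ABa_mul_ABa (ha : a * a = a) :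
    ∀ i j, ABa a b i * ABa a b j = ABa a b (i + j) := by
  intro i j
  induction i with
  | zero =>
      rw [Nat.zero_add]
      exact a_mul_ABa a b ha j
  | succ i ih =>
      rw [ABa_succ, mul_assoc, ih, show i + 1 + j = (i + j) + 1 from by omega]
      rfl

private lemma a_mul_ABa_ba : ∀ j, a * ABa b a j = ABm a b j := by
  intro j
  induction j with
  | zero => rfl
  | succ j ih =>
      show a * ((b * a) * ABa b a j) = (a * b) * ABm a b j
      rw [← mul_assoc, ← mul_assoc, mul_assoc (a * b) a (ABa b a j), ih]

private lemma ABa_mul_ABa_ba :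
    ∀ i j, ABa a b i * ABa b a j = ABm a b (i + j) := by
  intro i j
  induction i with
  | zero =>
      rw [Nat.zero_add]
      exact a_mul_ABa_ba a b j
  | succ i ih =>
      rw [ABa_succ, mul_assoc, ih, show i + 1 + j = (i + j) + 1 from by omega]
      rfl

private lemma ABm_mul_ABm :
    ∀ i j, ABm a b i * ABm a b j = ABm a b (i + j + 1) := by
  intro i j
  induction i with
  | zero =>
      rw [Nat.zero_add]
      rfl
  | succ i ih =>
      rw [ABm_succ, mul_assoc, ih, show i + 1 + j + 1 = (i + j + 1) + 1 from by omega]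
      rfl

private lemma z_mul_ABa {z : S} (hza : z * a = z) (hzb : z * b = z) :
    ∀ n, z * ABa a b n = z := by
  intro n
  induction n with
  | zero => exact hza
  | succ n ih =>
      rw [ABa_succ, ← mul_assoc, ← mul_assoc, hza, hzb, ih]

end Words

section MainLemma

variable {S : Type*} [Semigroup S]

/-- Key lemma: in an amiable semigroup avoiding `M`, if `a, b` are idempotents
having a common two-sided zero `θ` with `(ab)^{r+1} = θ`, then `ab = ba`. -/
private lemma main_lemma (hS : IsAmiable S) (hM : AvoidsM S) :
    ∀ (r : ℕ) (a b θ : S), a * a = a → b * b = b → θ * a = θ → a * θ = θ →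
      θ * b = θ → b * θ = θ → ABm a b r = θ → a * b = b * a := by
  intro r
  induction r with
  | zero =>
      intro a b θ ha hb hθa haθ hθb hbθ hr
      have hab : a * b = θ := hr
      by_cases hd : b * a = θ
      · exact hab.trans hd.symm
      · -- build a copy of M on {a, b, θ, b*a}
        exfalso
        have hθθ : θ * θ = θ := by
          calc θ * θ = θ * (a * b) := by rw [hab]
            _ = (θ * a) * b := (mul_assoc _ _ _).symm
            _ = θ * b := by rw [hθa]
            _ = θ := hθb
        have haθ' : a ≠ θ := by
          intro h
          exact hd (by rw [h, hbθ])
        have hbθ' : b ≠ θ := by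
          intro h
          exact hd (by rw [h, hθa])
        have hab' : a ≠ b := by
          intro h
          apply haθ'
          calc a = a * a := ha.symm
            _ = a * b := by rw [← h]
            _ = θ := hab
        have had : a ≠ b * a := by
          intro h
          apply haθ'
          calc a = a * a := ha.symm
            _ = a * (b * a) := by rw [← h]
            _ = (a * b) * a := (mul_assoc _ _ _).symm
            _ = θ * a := by rw [hab]
            _ = θ := hθa
        have hbd : b ≠ b * a := by
          intro h
          apply hbθ'
          calc b = b * b := hb.symm
            _ = (b * a) * b := by rw [← h]
            _ = b * (a * b) := mul_assoc _ _ _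
            _ = b * θ := by rw [hab]
            _ = θ := hbθ
        have hθd : θ ≠ b * a := fun h => hd h.symm
        apply hM
        refine ⟨a, b, θ, b * a, ⟨hab', haθ', had, hbθ', hbd, hθd⟩,
          ha, hab, haθ, ?_, rfl, hb, hbθ, ?_, hθa, hθb, hθθ, ?_, ?_, ?_, ?_, ?_⟩
        · rw [← mul_assoc, hab, hθa]
        · rw [← mul_assoc, hb]
        · rw [← mul_assoc, hθb, hθa]
        · rw [mul_assoc, ha]
        · rw [mul_assoc, hab, hbθ]
        · rw [mul_assoc, haθ, hbθ]
        · rw [mul_assoc, ← mul_assoc a b a, hab, hθa, hbθ]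
  | succ r' IH =>
      intro a b θ ha hb hθa haθ hθb hbθ hr
      by_cases hγ : ABm a b r' = θ
      · exact IH a b θ ha hb hθa haθ hθb hbθ hγ
      · exfalso
        -- θ absorbs c := a*b
        have hθc : θ * (a * b) = θ := by rw [← mul_assoc, hθa, hθb]
        have hcθ : (a * b) * θ = θ := by rw [mul_assoc, hbθ, haθ]
        have hθθ : θ * θ = θ := by
          have h1 : ∀ j, θ * ABm a b j = θ := by
            intro j
            induction j with
            | zero => exact hθc
            | succ j ih => rw [ABm_succ, ← mul_assoc, hθc, ih]
          have h2 := h1 (r' + 1)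
          rwa [hr] at h2
        -- get the L* and R* idempotents of c = a*b
        obtain ⟨e, ⟨hee, heL⟩, -⟩ := hS.1 (a * b)
        obtain ⟨f, ⟨hff, hfR⟩, -⟩ := hS.2 (a * b)
        have hce : (a * b) * e = a * b := lstar_mp_one (lstar_symm' heL) hee
        have heb : e * b = e :=
          lstar_mp_one heL (by rw [mul_assoc, hb])
        have hfc : f * (a * b) = a * b := rstar_mp_one (rstar_symm' hfR) hff
        have haf : a * f = f :=
          rstar_mp_one hfR (by rw [← mul_assoc, ha])
        have hbe : b * e = e := absorb_left hS hee heb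
        have hfa : f * a = f := absorb_right hS hff haf
        have hfe : f * e = a * b := by
          calc f * e = (f * a) * (b * e) := by rw [hfa, hbe]
            _ = f * (a * (b * e)) := mul_assoc _ _ _
            _ = f * ((a * b) * e) := by rw [← mul_assoc a b e]
            _ = f * (a * b) := by rw [hce]
            _ = a * b := hfc
        -- θ absorbs e and f
        have hθe : θ * e = θ := by
          calc θ * e = (θ * (a * b)) * e := by rw [hθc]
            _ = θ * ((a * b) * e) := mul_assoc _ _ _
            _ = θ * (a * b) := by rw [hce]
            _ = θ := hθc
        have hfθ : f * θ = θ := by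
          calc f * θ = f * ((a * b) * θ) := by rw [hcθ]
            _ = (f * (a * b)) * θ := (mul_assoc _ _ _).symm
            _ = (a * b) * θ := by rw [hfc]
            _ = θ := hcθ
        have heθ : e * θ = θ := by
          have hidem : (e * θ) * (e * θ) = e * θ := by
            rw [mul_assoc, ← mul_assoc θ e θ, hθe, hθθ]
          have h1 : θ = (a * b) * (e * θ) := by
            rw [← mul_assoc, hce, hcθ]
          have hL : LStar θ (e * θ) := lstar_of_div (a * b) e h1 rfl
          exact (idem_lstar_eq hS hθθ hidem hL).symm
        have hθf : θ * f = θ := by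
          have hidem : (θ * f) * (θ * f) = θ * f := by
            rw [mul_assoc, ← mul_assoc f θ f, hfθ, ← mul_assoc, hθθ]
          have h1 : θ = (θ * f) * (a * b) := by
            rw [mul_assoc, hfc, hθc]
          have hR : RStar θ (θ * f) := rstar_of_div (a * b) f h1 rfl
          exact (idem_rstar_eq hS hθθ hidem hR).symm
        -- γ f = θ where γ = (ab)^{r'+1}
        have hγf : ABm a b r' * f = θ := by
          have h1 : ABm a b r' * (a * b) = θ * (a * b) := by
            rw [ABm_mul_ab, hr, hθc]
          have h2 := rstar_mp hfR h1
          rwa [hθf] at h2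
        -- (ef)^{r'+1} = θ
        have hefpow : ABm e f r' = θ := by
          cases r' with
          | zero =>
              have h1 : (a * b) * f = (a * b) * θ := by
                have : (a * b) * f = θ := hγf
                rw [this, hcθ]
              have h2 := lstar_mp heL h1
              rw [heθ] at h2
              exact h2
          | succ r'' =>
              have hx : (a * b) * (ABm a b r'' * f) = θ := by
                rw [← mul_assoc]
                exact hγf
              have h1 : (a * b) * (ABm a b r'' * f) = (a * b) * θ := by
                rw [hx, hcθ]
              have h2 := lstar_mp heL h1
              rw [heθ] at h2
              -- ABm e f (r''+1) = e * (ABm a b r'' * f)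
              have hEF : ∀ j, ABm e f (j + 1) = e * (ABm a b j * f) := by
                intro j
                induction j with
                | zero =>
                    show (e * f) * (e * f) = e * ((a * b) * f)
                    rw [mul_assoc, ← mul_assoc f e f, hfe]
                | succ j ih =>
                    show (e * f) * ABm e f (j + 1) = e * (ABm a b (j + 1) * f)
                    rw [ih, mul_assoc, ← mul_assoc f e (ABm a b j * f), hfe,
                      ← mul_assoc (a * b) (ABm a b j) f]
                    rfl
              rw [hEF r'']
              exact h2
        -- induction hypothesis applied to the pair (e, f)
        have hcomm : e * f = f * e :=
          IH e f θ hee hff hθe heθ hθf hfθ hefpow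
        -- hence c*c = c, contradiction
        have hcc : (a * b) * (a * b) = a * b := by
          calc (a * b) * (a * b) = (f * e) * (f * e) := by rw [hfe]
            _ = f * ((e * f) * e) := by rw [mul_assoc, ← mul_assoc e f e]
            _ = f * ((f * e) * e) := by rw [hcomm]
            _ = f * (f * (e * e)) := by rw [mul_assoc f e e]
            _ = f * (f * e) := by rw [hee]
            _ = (f * f) * e := (mul_assoc _ _ _).symm
            _ = f * e := by rw [hff]
            _ = a * b := hfe
        have hpow : ∀ j, ABm a b j = a * b := by
          intro j
          induction j with
          | zero => rfl
          | succ j ih => rw [ABm_succ, ih, hcc]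
        exact hγ ((hpow r').trans ((hpow (r' + 1)).symm.trans hr))

end MainLemma

/-- If `a, b` are noncommuting idempotents of an amiable semigroup avoiding `M`,
then `(ab)^m a ≠ (ba)^n b` for all `m, n ≥ 0`, and `(ab)^m a ≠ (ab)^n a` whenever
`m > n ≥ 0`.  (Here `ABa a b n = (ab)^n a` and `ABa b a n = (ba)^n b`.) -/
theorem pow_ab_mul_a_ne {S : Type*} [Semigroup S] (hS : IsAmiable S) (hM : AvoidsM S)
    (a b : S) (ha : a * a = a) (hb : b * b = b) (hne : a * b ≠ b * a) :
    (∀ m n : ℕ, ABa a b m ≠ ABa b a n) ∧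
    (∀ m n : ℕ, n < m → ABa a b m ≠ ABa a b n) := by
  constructor
  · -- Part 1
    intro m n hz
    apply hne
    have hza : ABa a b m * a = ABa a b m := ABa_mul_a a b ha m
    have haz : a * ABa a b m = ABa a b m := a_mul_ABa a b ha m
    have hzb : ABa a b m * b = ABa a b m := by
      rw [hz]; exact ABa_mul_a b a hb n
    have hbz : b * ABa a b m = ABa a b m := by
      rw [hz]
      · exact a_mul_ABa b a hb n
    have hfin : ABm a b m = ABa a b m := by
      rw [← ABa_mul_b a b hb m, hzb]
    exact main_lemma hS hM m a b (ABa a b m) ha hb hza haz hzb hbz hfin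
  · -- Part 2
    intro m n hmn hrel
    apply hne
    set k := m - n with hk
    have hk1 : 1 ≤ k := by omega
    have hm : m = n + k := by omega
    -- one-step periodicity
    have per : ∀ i, ABa a b (n + k + i) = ABa a b (n + i) := by
      intro i
      induction i with
      | zero =>
          rw [show n + k + 0 = m from by omega, show n + 0 = n from by omega]
          exact hrel
      | succ i ih =>
          show (a * b) * ABa a b (n + k + i) = (a * b) * ABa a b (n + i)
          rw [ih]
    have hAk : ∀ z, n ≤ z → ABa a b (z + k) = ABa a b z := by
      intro z hz
      have h := per (z - n)
      rwa [show n + k + (z - n) = z + k from by omega,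
        show n + (z - n) = z from by omega] at h
    have hMk : ∀ z, n ≤ z → ABm a b (z + k) = ABm a b z := by
      intro z hz
      rw [← ABa_mul_b a b hb (z + k), ← ABa_mul_b a b hb z, hAk z hz]
    have hMbak : ∀ z, n ≤ z → ABm b a (z + k) = ABm b a z := by
      intro z hz
      rw [← b_mul_ABa a b (z + k), ← b_mul_ABa a b z, hAk z hz]
    have hAbak : ∀ z, n + 1 ≤ z → ABa b a (z + k) = ABa b a z := by
      intro z hz
      obtain ⟨w, rfl⟩ : ∃ w, z = w + 1 := ⟨z - 1, by omega⟩
      rw [show w + 1 + k = (w + k) + 1 from by omega,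
        ← ABm_mul_a b a (w + k), ← ABm_mul_a b a w, hMbak w (by omega)]
    -- multi-step periodicity
    have tAk : ∀ t z, n ≤ z → ABa a b (z + t * k) = ABa a b z := by
      intro t
      induction t with
      | zero => intro z hz; rw [Nat.zero_mul, Nat.add_zero]
      | succ t ih =>
          intro z hz
          rw [Nat.succ_mul, ← Nat.add_assoc,
            hAk (z + t * k) (by omega), ih z hz]
    have tMk : ∀ t z, n ≤ z → ABm a b (z + t * k) = ABm a b z := by
      intro t
      induction t with
      | zero => intro z hz; rw [Nat.zero_mul, Nat.add_zero]
      | succ t ih =>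
          intro z hz
          rw [Nat.succ_mul, ← Nat.add_assoc,
            hMk (z + t * k) (by omega), ih z hz]
    have tMbak : ∀ t z, n ≤ z → ABm b a (z + t * k) = ABm b a z := by
      intro t
      induction t with
      | zero => intro z hz; rw [Nat.zero_mul, Nat.add_zero]
      | succ t ih =>
          intro z hz
          rw [Nat.succ_mul, ← Nat.add_assoc,
            hMbak (z + t * k) (by omega), ih z hz]
    have tAbak : ∀ t z, n + 1 ≤ z → ABa b a (z + t * k) = ABa b a z := by
      intro t
      induction t with
      | zero => intro z hz; rw [Nat.zero_mul, Nat.add_zero]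
      | succ t ih =>
          intro z hz
          rw [Nat.succ_mul, ← Nat.add_assoc,
            hAbak (z + t * k) (by omega), ih z hz]
    -- the four stable idempotents
    set N := (n + 1) * k with hN
    have hNn : n + 1 ≤ N := by
      rw [hN]
      exact Nat.le_mul_of_pos_right (n + 1) (by omega)
    set N' := N - 1 with hN'def
    have hN' : N = N' + 1 := by omega
    have hN'n : n ≤ N' := by omega
    have hWW : ABa a b N * ABa a b N = ABa a b N := by
      rw [ABa_mul_ABa a b ha N N, show N + N = N + (n + 1) * k from by omega]
      exact tAk (n + 1) N (by omega)
    have hGG : ABm a b N' * ABm a b N' = ABm a b N' := by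
      rw [ABm_mul_ABm a b N' N', show N' + N' + 1 = N' + (n + 1) * k from by omega]
      exact tMk (n + 1) N' hN'n
    have hHH : ABm b a N' * ABm b a N' = ABm b a N' := by
      rw [ABm_mul_ABm b a N' N', show N' + N' + 1 = N' + (n + 1) * k from by omega]
      exact tMbak (n + 1) N' hN'n
    have hUU : ABa b a N * ABa b a N = ABa b a N := by
      rw [ABa_mul_ABa b a hb N N, show N + N = N + (n + 1) * k from by omega]
      exact tAbak (n + 1) N hNn
    -- Green's relations identify them
    have h1 : ABa a b N = ABm a b N' * a := by
      rw [ABm_mul_a a b N', hN']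
    have h2 : ABm a b N' = ABa a b N * ABa b a (k - 1) := by
      rw [ABa_mul_ABa_ba a b N (k - 1),
        show N + (k - 1) = N' + k from by omega]
      exact (hMk N' hN'n).symm
    have hWG : ABa a b N = ABm a b N' :=
      idem_rstar_eq hS hWW hGG (rstar_of_div a (ABa b a (k - 1)) h1 h2)
    have h3 : ABa a b N = a * ABm b a N' := by
      rw [a_mul_ABm_ba a b N', hN']
    have h4 : ABm b a N' = ABa b a (k - 1) * ABa a b N := by
      rw [ABa_mul_ABa_ba b a (k - 1) N,
        show k - 1 + N = N' + k from by omega]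
      exact (hMbak N' hN'n).symm
    have hWH : ABa a b N = ABm b a N' :=
      idem_lstar_eq hS hWW hHH (lstar_of_div a (ABa b a (k - 1)) h3 h4)
    have h5 : ABa b a N = ABm b a N' * b := by
      rw [ABm_mul_a b a N', hN']
    have h6 : ABm b a N' = ABa b a N * ABa a b (k - 1) := by
      rw [ABa_mul_ABa_ba b a N (k - 1),
        show N + (k - 1) = N' + k from by omega]
      exact (hMbak N' hN'n).symm
    have hUH : ABa b a N = ABm b a N' :=
      idem_rstar_eq hS hUU hHH (rstar_of_div b (ABa a b (k - 1)) h5 h6)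
    have hWU : ABa a b N = ABa b a N := hWH.trans hUH.symm
    -- θ := ABa a b N is a zero for a, b
    have hθa : ABa a b N * a = ABa a b N := ABa_mul_a a b ha N
    have haθ : a * ABa a b N = ABa a b N := a_mul_ABa a b ha N
    have hθb : ABa a b N * b = ABa a b N := by
      rw [hWU]; exact ABa_mul_a b a hb N
    have hbθ : b * ABa a b N = ABa a b N := by
      rw [hWU]; exact a_mul_ABa b a hb N
    have hfin : ABm a b N' = ABa a b N := hWG.symm
    exact main_lemma hS hM N' a b (ABa a b N) ha hb hθa haθ hθb hbθ hfin
end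

section
/- Let A = [[1,0],[1,0]], B = [[1,1],[0,0]], C = [[1,1],[1,1]], D = [[2,0],[0,0]] be 2×2 integer matrices, and let F₀ = { 2^n·A, 2^n·B, 2^n·C, 2^n·D : n ≥ 0 }. Then F₀ is closed under matrix multiplication (so it is a subsemigroup of the multiplicative semigroup of 2×2 integer matrices), and the only idempotent elements of F₀ are A and B; moreover AB = C ≠ D = BA. -/
/-- `A = [[1,0],[1,0]]`. -/
def MA : Matrix (Fin 2) (Fin 2) ℤ := !![1, 0; 1, 0]
/-- `B = [[1,1],[0,0]]`. -/
def MB : Matrix (Fin 2) (Fin 2) ℤ := !![1, 1; 0, 0]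
/-- `C = [[1,1],[1,1]]`. -/
def MC : Matrix (Fin 2) (Fin 2) ℤ := !![1, 1; 1, 1]
/-- `D = [[2,0],[0,0]]`. -/
def MD : Matrix (Fin 2) (Fin 2) ℤ := !![2, 0; 0, 0]

/-- Fountain's set `F₀ = {2^n A, 2^n B, 2^n C, 2^n D : n ≥ 0}`. -/
def F0 : Set (Matrix (Fin 2) (Fin 2) ℤ) :=
  {X | ∃ n : ℕ, X = (2 : ℤ) ^ n • MA ∨ X = (2 : ℤ) ^ n • MB ∨
                X = (2 : ℤ) ^ n • MC ∨ X = (2 : ℤ) ^ n • MD}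

lemma smul_prod (M N P : Matrix (Fin 2) (Fin 2) ℤ) (k : ℕ)
    (hMN : M * N = (2:ℤ)^k • P) (n m : ℕ) :
    ((2:ℤ)^n • M) * ((2:ℤ)^m • N) = (2:ℤ)^(n+m+k) • P := by
  rw [smul_mul_assoc, mul_smul_comm, hMN, smul_smul, smul_smul, ← pow_add, ← pow_add]

lemma pAA : MA * MA = (2:ℤ)^0 • MA := by decide
lemma pAB : MA * MB = (2:ℤ)^0 • MC := by decide
lemma pAC : MA * MC = (2:ℤ)^0 • MC := by decide
lemma pAD : MA * MD = (2:ℤ)^1 • MA := by decide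
lemma pBA : MB * MA = (2:ℤ)^0 • MD := by decide
lemma pBB : MB * MB = (2:ℤ)^0 • MB := by decide
lemma pBC : MB * MC = (2:ℤ)^1 • MB := by decide
lemma pBD : MB * MD = (2:ℤ)^0 • MD := by decide
lemma pCA : MC * MA = (2:ℤ)^1 • MA := by decide
lemma pCB : MC * MB = (2:ℤ)^0 • MC := by decide
lemma pCC : MC * MC = (2:ℤ)^1 • MC := by decide
lemma pCD : MC * MD = (2:ℤ)^1 • MA := by decide
lemma pDA : MD * MA = (2:ℤ)^0 • MD := by decide
lemma pDB : MD * MB = (2:ℤ)^1 • MB := by decide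
lemma pDC : MD * MC = (2:ℤ)^1 • MB := by decide
lemma pDD : MD * MD = (2:ℤ)^1 • MD := by decide

lemma hA : ∀ j : ℕ, (2:ℤ)^j • MA ∈ F0 := fun j => ⟨j, Or.inl rfl⟩
lemma hB : ∀ j : ℕ, (2:ℤ)^j • MB ∈ F0 := fun j => ⟨j, Or.inr (Or.inl rfl)⟩
lemma hC : ∀ j : ℕ, (2:ℤ)^j • MC ∈ F0 := fun j => ⟨j, Or.inr (Or.inr (Or.inl rfl))⟩
lemma hD : ∀ j : ℕ, (2:ℤ)^j • MD ∈ F0 := fun j => ⟨j, Or.inr (Or.inr (Or.inr rfl))⟩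

/-- `F₀` is closed under matrix multiplication, its only idempotents are `A` and
`B`, and `AB = C ≠ D = BA`. -/
theorem F0_subsemigroup_and_idempotents :
    (∀ X ∈ F0, ∀ Y ∈ F0, X * Y ∈ F0) ∧
    (MA ∈ F0 ∧ MB ∈ F0 ∧ MA * MA = MA ∧ MB * MB = MB) ∧
    (∀ X ∈ F0, X * X = X → X = MA ∨ X = MB) ∧
    (MA * MB = MC ∧ MB * MA = MD ∧ MC ≠ MD) := by
  refine ⟨?_, ⟨?_, ?_, by decide, by decide⟩, ?_, by decide, by decide, by decide⟩
  · rintro X ⟨n, hX | hX | hX | hX⟩ Y ⟨m, hY | hY | hY | hY⟩ <;> subst hX <;> subst hY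
    · rw [smul_prod _ _ _ _ pAA]; exact hA _
    · rw [smul_prod _ _ _ _ pAB]; exact hC _
    · rw [smul_prod _ _ _ _ pAC]; exact hC _
    · rw [smul_prod _ _ _ _ pAD]; exact hA _
    · rw [smul_prod _ _ _ _ pBA]; exact hD _
    · rw [smul_prod _ _ _ _ pBB]; exact hB _
    · rw [smul_prod _ _ _ _ pBC]; exact hB _
    · rw [smul_prod _ _ _ _ pBD]; exact hD _
    · rw [smul_prod _ _ _ _ pCA]; exact hA _
    · rw [smul_prod _ _ _ _ pCB]; exact hC _
    · rw [smul_prod _ _ _ _ pCC]; exact hC _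
    · rw [smul_prod _ _ _ _ pCD]; exact hA _
    · rw [smul_prod _ _ _ _ pDA]; exact hD _
    · rw [smul_prod _ _ _ _ pDB]; exact hB _
    · rw [smul_prod _ _ _ _ pDC]; exact hB _
    · rw [smul_prod _ _ _ _ pDD]; exact hD _
  · exact ⟨0, Or.inl (by simp)⟩
  · exact ⟨0, Or.inr (Or.inl (by simp))⟩
  · rintro X ⟨n, hX | hX | hX | hX⟩ h <;> subst hX
    · rw [smul_prod _ _ _ _ pAA] at h
      have h00 := congrFun (congrFun h 0) 0
      simp [MA, Matrix.smul_apply] at h00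
      subst h00; left; simp
    · rw [smul_prod _ _ _ _ pBB] at h
      have h00 := congrFun (congrFun h 0) 0
      simp [MB, Matrix.smul_apply] at h00
      subst h00; right; simp
    · rw [smul_prod _ _ _ _ pCC] at h
      have h00 := congrFun (congrFun h 0) 0
      simp [MC, Matrix.smul_apply] at h00
      omega
    · rw [smul_prod _ _ _ _ pDD] at h
      have h00 := congrFun (congrFun h 0) 0
      simp [MD, Matrix.smul_apply] at h00
      omega
end

section
/- Let A = [[1,0],[1,0]], B = [[1,1],[0,0]], C = [[1,1],[1,1]], D = [[2,0],[0,0]] be 2×2 integer matrices and let F₀ be the subsemigroup { 2^n·A, 2^n·B, 2^n·C, 2^n·D : n ≥ 0 } of the multiplicative semigroup of 2×2 integer matrices. Then the 𝓛*-classes of F₀ are { 2^n·A, 2^n·D : n ≥ 0 } and { 2^n·B, 2^n·C : n ≥ 0 }, and the 𝓡*-classes of F₀ are { 2^n·A, 2^n·C : n ≥ 0 } and { 2^n·B, 2^n·D : n ≥ 0 }. Consequently F₀ is amiable; it is not adequate since AB = C ≠ D = BA. -/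
/-- The `𝓛*`-relation of the semigroup `F₀`, computed with `F₀¹ = F₀ ∪ {1}`
realized inside the monoid of `2 × 2` integer matrices. -/
def LStarOn (T : Set (Matrix (Fin 2) (Fin 2) ℤ)) (x y : Matrix (Fin 2) (Fin 2) ℤ) : Prop :=
  ∀ u ∈ insert (1 : Matrix (Fin 2) (Fin 2) ℤ) T, ∀ v ∈ insert (1 : Matrix (Fin 2) (Fin 2) ℤ) T,
    (x * u = x * v ↔ y * u = y * v)

/-- The `𝓡*`-relation of the semigroup `F₀`, computed with `F₀¹ = F₀ ∪ {1}`
realized inside the monoid of `2 × 2` integer matrices. -/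
def RStarOn (T : Set (Matrix (Fin 2) (Fin 2) ℤ)) (x y : Matrix (Fin 2) (Fin 2) ℤ) : Prop :=
  ∀ u ∈ insert (1 : Matrix (Fin 2) (Fin 2) ℤ) T, ∀ v ∈ insert (1 : Matrix (Fin 2) (Fin 2) ℤ) T,
    (u * x = v * x ↔ u * y = v * y)


abbrev M2 := Matrix (Fin 2) (Fin 2) ℤ

lemma smul_mul_iff (n : ℕ) (x u v : M2) :
    ((2:ℤ)^n • x) * u = ((2:ℤ)^n • x) * v ↔ x * u = x * v := by
  rw [smul_mul_assoc, smul_mul_assoc]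
  exact ⟨fun h => smul_right_injective _ (pow_ne_zero n two_ne_zero) h, fun h => by rw [h]⟩

lemma mul_smul_iff (n : ℕ) (x u v : M2) :
    u * ((2:ℤ)^n • x) = v * ((2:ℤ)^n • x) ↔ u * x = v * x := by
  rw [mul_smul_comm, mul_smul_comm]
  exact ⟨fun h => smul_right_injective _ (pow_ne_zero n two_ne_zero) h, fun h => by rw [h]⟩

lemma rowA (u v : M2) : MA * u = MA * v ↔ (u 0 0 = v 0 0 ∧ u 0 1 = v 0 1) := by
  rw [← Matrix.ext_iff]; simp [Fin.forall_fin_two, MA, Matrix.mul_apply, Fin.sum_univ_two]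
lemma rowD (u v : M2) : MD * u = MD * v ↔ (u 0 0 = v 0 0 ∧ u 0 1 = v 0 1) := by
  rw [← Matrix.ext_iff]; simp [Fin.forall_fin_two, MD, Matrix.mul_apply, Fin.sum_univ_two]
lemma rowB (u v : M2) : MB * u = MB * v ↔
    (u 0 0 + u 1 0 = v 0 0 + v 1 0 ∧ u 0 1 + u 1 1 = v 0 1 + v 1 1) := by
  rw [← Matrix.ext_iff]; simp [Fin.forall_fin_two, MB, Matrix.mul_apply, Fin.sum_univ_two]
lemma rowC (u v : M2) : MC * u = MC * v ↔
    (u 0 0 + u 1 0 = v 0 0 + v 1 0 ∧ u 0 1 + u 1 1 = v 0 1 + v 1 1) := by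
  rw [← Matrix.ext_iff]; simp [Fin.forall_fin_two, MC, Matrix.mul_apply, Fin.sum_univ_two]
lemma colA (u v : M2) : u * MA = v * MA ↔
    (u 0 0 + u 0 1 = v 0 0 + v 0 1 ∧ u 1 0 + u 1 1 = v 1 0 + v 1 1) := by
  rw [← Matrix.ext_iff]; simp [Fin.forall_fin_two, MA, Matrix.mul_apply, Fin.sum_univ_two]
lemma colC (u v : M2) : u * MC = v * MC ↔
    (u 0 0 + u 0 1 = v 0 0 + v 0 1 ∧ u 1 0 + u 1 1 = v 1 0 + v 1 1) := by
  rw [← Matrix.ext_iff]; simp [Fin.forall_fin_two, MC, Matrix.mul_apply, Fin.sum_univ_two]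
lemma colB (u v : M2) : u * MB = v * MB ↔ (u 0 0 = v 0 0 ∧ u 1 0 = v 1 0) := by
  rw [← Matrix.ext_iff]; simp [Fin.forall_fin_two, MB, Matrix.mul_apply, Fin.sum_univ_two]
lemma colD (u v : M2) : u * MD = v * MD ↔ (u 0 0 = v 0 0 ∧ u 1 0 = v 1 0) := by
  rw [← Matrix.ext_iff]; simp [Fin.forall_fin_two, MD, Matrix.mul_apply, Fin.sum_univ_two]

lemma Lchar1 (x : M2) (h : ∃ n : ℕ, x = (2:ℤ)^n • MA ∨ x = (2:ℤ)^n • MD) (u v : M2) :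
    x * u = x * v ↔ (u 0 0 = v 0 0 ∧ u 0 1 = v 0 1) := by
  obtain ⟨n, h | h⟩ := h <;> subst h
  · rw [smul_mul_iff, rowA]
  · rw [smul_mul_iff, rowD]
lemma Lchar2 (x : M2) (h : ∃ n : ℕ, x = (2:ℤ)^n • MB ∨ x = (2:ℤ)^n • MC) (u v : M2) :
    x * u = x * v ↔ (u 0 0 + u 1 0 = v 0 0 + v 1 0 ∧ u 0 1 + u 1 1 = v 0 1 + v 1 1) := by
  obtain ⟨n, h | h⟩ := h <;> subst h
  · rw [smul_mul_iff, rowB]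
  · rw [smul_mul_iff, rowC]
lemma Rchar1 (x : M2) (h : ∃ n : ℕ, x = (2:ℤ)^n • MA ∨ x = (2:ℤ)^n • MC) (u v : M2) :
    u * x = v * x ↔ (u 0 0 + u 0 1 = v 0 0 + v 0 1 ∧ u 1 0 + u 1 1 = v 1 0 + v 1 1) := by
  obtain ⟨n, h | h⟩ := h <;> subst h
  · rw [mul_smul_iff, colA]
  · rw [mul_smul_iff, colC]
lemma Rchar2 (x : M2) (h : ∃ n : ℕ, x = (2:ℤ)^n • MB ∨ x = (2:ℤ)^n • MD) (u v : M2) :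
    u * x = v * x ↔ (u 0 0 = v 0 0 ∧ u 1 0 = v 1 0) := by
  obtain ⟨n, h | h⟩ := h <;> subst h
  · rw [mul_smul_iff, colB]
  · rw [mul_smul_iff, colD]

lemma mem2A : ((2:ℤ)^1 • MA) ∈ insert (1:M2) F0 :=
  Set.mem_insert_iff.mpr (Or.inr ⟨1, Or.inl rfl⟩)
lemma memMD : MD ∈ insert (1:M2) F0 :=
  Set.mem_insert_iff.mpr (Or.inr ⟨0, Or.inr (Or.inr (Or.inr (by simp)))⟩)
lemma memMC : MC ∈ insert (1:M2) F0 :=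
  Set.mem_insert_iff.mpr (Or.inr ⟨0, Or.inr (Or.inr (Or.inl (by simp)))⟩)

lemma notL (x y : M2) (hx : ∃ n : ℕ, x = (2:ℤ)^n • MA ∨ x = (2:ℤ)^n • MD)
    (hy : ∃ n : ℕ, y = (2:ℤ)^n • MB ∨ y = (2:ℤ)^n • MC) : ¬ LStarOn F0 x y := by
  intro h
  have h2 := h _ mem2A _ memMD
  rw [Lchar1 x hx, Lchar2 y hy] at h2
  norm_num [MA, MD, Matrix.smul_apply] at h2

lemma notR (x y : M2) (hx : ∃ n : ℕ, x = (2:ℤ)^n • MA ∨ x = (2:ℤ)^n • MC)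
    (hy : ∃ n : ℕ, y = (2:ℤ)^n • MB ∨ y = (2:ℤ)^n • MD) : ¬ RStarOn F0 x y := by
  intro h
  have h2 := h _ mem2A _ memMC
  rw [Rchar1 x hx, Rchar2 y hy] at h2
  norm_num [MA, MC, Matrix.smul_apply] at h2

lemma F0_splitL (x : M2) (hx : x ∈ F0) :
    (∃ n : ℕ, x = (2:ℤ)^n • MA ∨ x = (2:ℤ)^n • MD) ∨
    (∃ n : ℕ, x = (2:ℤ)^n • MB ∨ x = (2:ℤ)^n • MC) := by
  obtain ⟨n, h | h | h | h⟩ := hx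
  exacts [Or.inl ⟨n, Or.inl h⟩, Or.inr ⟨n, Or.inl h⟩, Or.inr ⟨n, Or.inr h⟩, Or.inl ⟨n, Or.inr h⟩]
lemma F0_splitR (x : M2) (hx : x ∈ F0) :
    (∃ n : ℕ, x = (2:ℤ)^n • MA ∨ x = (2:ℤ)^n • MC) ∨
    (∃ n : ℕ, x = (2:ℤ)^n • MB ∨ x = (2:ℤ)^n • MD) := by
  obtain ⟨n, h | h | h | h⟩ := hx
  exacts [Or.inl ⟨n, Or.inl h⟩, Or.inr ⟨n, Or.inl h⟩, Or.inl ⟨n, Or.inr h⟩, Or.inr ⟨n, Or.inr h⟩]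

lemma prodAA : MA * MA = MA := by
  ext i j; fin_cases i <;> fin_cases j <;> simp [MA, Matrix.mul_apply, Fin.sum_univ_two]
lemma prodBB : MB * MB = MB := by
  ext i j; fin_cases i <;> fin_cases j <;> simp [MB, Matrix.mul_apply, Fin.sum_univ_two]
lemma prodAB : MA * MB = MC := by
  ext i j; fin_cases i <;> fin_cases j <;> simp [MA, MB, MC, Matrix.mul_apply, Fin.sum_univ_two]
lemma prodBA : MB * MA = MD := by
  ext i j; fin_cases i <;> fin_cases j <;> simp [MA, MB, MD, Matrix.mul_apply, Fin.sum_univ_two]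
lemma CneD : MC ≠ MD := by
  intro h
  have := congrFun (congrFun h 0) 1
  simp [MC, MD] at this

lemma idemMA (n : ℕ) (h : ((2:ℤ)^n • MA) * ((2:ℤ)^n • MA) = (2:ℤ)^n • MA) :
    (2:ℤ)^n • MA = MA := by
  rw [smul_mul_assoc, mul_smul_comm, prodAA, smul_smul] at h
  have h0 := congrFun (congrFun h 0) 0
  simp [MA] at h0
  have hp : (0:ℤ) < 2^n := by positivity
  have h1 : (2:ℤ)^n = 1 := by nlinarith
  rw [h1, one_smul]
lemma idemMB (n : ℕ) (h : ((2:ℤ)^n • MB) * ((2:ℤ)^n • MB) = (2:ℤ)^n • MB) :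
    (2:ℤ)^n • MB = MB := by
  rw [smul_mul_assoc, mul_smul_comm, prodBB, smul_smul] at h
  have h0 := congrFun (congrFun h 0) 0
  simp [MB] at h0
  have hp : (0:ℤ) < 2^n := by positivity
  have h1 : (2:ℤ)^n = 1 := by nlinarith
  rw [h1, one_smul]
lemma idemMC (n : ℕ) (h : ((2:ℤ)^n • MC) * ((2:ℤ)^n • MC) = (2:ℤ)^n • MC) : False := by
  have h0 := congrFun (congrFun h 0) 0
  simp [MC, Matrix.mul_apply, Fin.sum_univ_two] at h0
  have hp : (0:ℤ) < 2^n := by positivity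
  nlinarith
lemma idemMD (n : ℕ) (h : ((2:ℤ)^n • MD) * ((2:ℤ)^n • MD) = (2:ℤ)^n • MD) : False := by
  have h0 := congrFun (congrFun h 0) 0
  simp [MD, Matrix.mul_apply, Fin.sum_univ_two] at h0
  have hp : (0:ℤ) < 2^n := by positivity
  nlinarith

/-- The `𝓛*`-classes of `F₀` are `{2^n A, 2^n D}` and `{2^n B, 2^n C}`, the
`𝓡*`-classes are `{2^n A, 2^n C}` and `{2^n B, 2^n D}`; consequently `F₀` is
amiable (each `𝓛*`- and `𝓡*`-class has exactly one idempotent), and it is not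
adequate since `AB = C ≠ D = BA` for the idempotents `A, B`. -/
theorem F0_amiable_not_adequate :
    (∀ x ∈ F0, ∀ y ∈ F0, (LStarOn F0 x y ↔
      ((x ∈ {X | ∃ n : ℕ, X = (2 : ℤ) ^ n • MA ∨ X = (2 : ℤ) ^ n • MD} ∧
        y ∈ {X | ∃ n : ℕ, X = (2 : ℤ) ^ n • MA ∨ X = (2 : ℤ) ^ n • MD}) ∨
       (x ∈ {X | ∃ n : ℕ, X = (2 : ℤ) ^ n • MB ∨ X = (2 : ℤ) ^ n • MC} ∧
        y ∈ {X | ∃ n : ℕ, X = (2 : ℤ) ^ n • MB ∨ X = (2 : ℤ) ^ n • MC})))) ∧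
    (∀ x ∈ F0, ∀ y ∈ F0, (RStarOn F0 x y ↔
      ((x ∈ {X | ∃ n : ℕ, X = (2 : ℤ) ^ n • MA ∨ X = (2 : ℤ) ^ n • MC} ∧
        y ∈ {X | ∃ n : ℕ, X = (2 : ℤ) ^ n • MA ∨ X = (2 : ℤ) ^ n • MC}) ∨
       (x ∈ {X | ∃ n : ℕ, X = (2 : ℤ) ^ n • MB ∨ X = (2 : ℤ) ^ n • MD} ∧
        y ∈ {X | ∃ n : ℕ, X = (2 : ℤ) ^ n • MB ∨ X = (2 : ℤ) ^ n • MD})))) ∧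
    (∀ x ∈ F0, ∃! e, e ∈ F0 ∧ e * e = e ∧ LStarOn F0 x e) ∧
    (∀ x ∈ F0, ∃! e, e ∈ F0 ∧ e * e = e ∧ RStarOn F0 x e) ∧
    (MA * MA = MA ∧ MB * MB = MB ∧ MA * MB = MC ∧ MB * MA = MD ∧ MC ≠ MD) := by
  refine ⟨?_, ?_, ?_, ?_, prodAA, prodBB, prodAB, prodBA, CneD⟩
  · intro x hx y hy
    constructor
    · intro h
      rcases F0_splitL x hx with h1 | h1 <;> rcases F0_splitL y hy with h2 | h2
      · exact Or.inl ⟨h1, h2⟩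
      · exact (notL x y h1 h2 h).elim
      · exact (notL y x h2 h1 (fun u hu v hv => (h u hu v hv).symm)).elim
      · exact Or.inr ⟨h1, h2⟩
    · rintro (⟨h1, h2⟩ | ⟨h1, h2⟩) <;> intro u _ v _
      · rw [Lchar1 x h1, Lchar1 y h2]
      · rw [Lchar2 x h1, Lchar2 y h2]
  · intro x hx y hy
    constructor
    · intro h
      rcases F0_splitR x hx with h1 | h1 <;> rcases F0_splitR y hy with h2 | h2
      · exact Or.inl ⟨h1, h2⟩
      · exact (notR x y h1 h2 h).elim
      · exact (notR y x h2 h1 (fun u hu v hv => (h u hu v hv).symm)).elim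
      · exact Or.inr ⟨h1, h2⟩
    · rintro (⟨h1, h2⟩ | ⟨h1, h2⟩) <;> intro u _ v _
      · rw [Rchar1 x h1, Rchar1 y h2]
      · rw [Rchar2 x h1, Rchar2 y h2]
  · intro x hx
    rcases F0_splitL x hx with h1 | h1
    · refine ⟨MA, ⟨⟨0, Or.inl (by simp)⟩, prodAA, fun u _ v _ => ?_⟩, ?_⟩
      · rw [Lchar1 x h1, Lchar1 MA ⟨0, Or.inl (by simp)⟩]
      · rintro e ⟨he0, he1, he2⟩
        obtain ⟨n, h | h | h | h⟩ := he0 <;> subst h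
        · exact idemMA n he1
        · exact (notL x _ h1 ⟨n, Or.inl rfl⟩ he2).elim
        · exact (notL x _ h1 ⟨n, Or.inr rfl⟩ he2).elim
        · exact (idemMD n he1).elim
    · refine ⟨MB, ⟨⟨0, Or.inr (Or.inl (by simp))⟩, prodBB, fun u _ v _ => ?_⟩, ?_⟩
      · rw [Lchar2 x h1, Lchar2 MB ⟨0, Or.inl (by simp)⟩]
      · rintro e ⟨he0, he1, he2⟩
        obtain ⟨n, h | h | h | h⟩ := he0 <;> subst h
        · exact (notL _ x ⟨n, Or.inl rfl⟩ h1 (fun u hu v hv => (he2 u hu v hv).symm)).elim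
        · exact idemMB n he1
        · exact (idemMC n he1).elim
        · exact (notL _ x ⟨n, Or.inr rfl⟩ h1 (fun u hu v hv => (he2 u hu v hv).symm)).elim
  · intro x hx
    rcases F0_splitR x hx with h1 | h1
    · refine ⟨MA, ⟨⟨0, Or.inl (by simp)⟩, prodAA, fun u _ v _ => ?_⟩, ?_⟩
      · rw [Rchar1 x h1, Rchar1 MA ⟨0, Or.inl (by simp)⟩]
      · rintro e ⟨he0, he1, he2⟩
        obtain ⟨n, h | h | h | h⟩ := he0 <;> subst h
        · exact idemMA n he1
        · exact (notR x _ h1 ⟨n, Or.inl rfl⟩ he2).elim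
        · exact (idemMC n he1).elim
        · exact (notR x _ h1 ⟨n, Or.inr rfl⟩ he2).elim
    · refine ⟨MB, ⟨⟨0, Or.inr (Or.inl (by simp))⟩, prodBB, fun u _ v _ => ?_⟩, ?_⟩
      · rw [Rchar2 x h1, Rchar2 MB ⟨0, Or.inl (by simp)⟩]
      · rintro e ⟨he0, he1, he2⟩
        obtain ⟨n, h | h | h | h⟩ := he0 <;> subst h
        · exact (notR _ x ⟨n, Or.inl rfl⟩ h1 (fun u hu v hv => (he2 u hu v hv).symm)).elim
        · exact idemMB n he1
        · exact (notR _ x ⟨n, Or.inr rfl⟩ h1 (fun u hu v hv => (he2 u hu v hv).symm)).elim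
        · exact (idemMD n he1).elim
end
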